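/- arXiv:2304.04213 — 2 statements merged into one kernel-verified Lean document; each statement's English description precedes it below -/
import Mathlib

section
/- Let A = A_q ⊗ I_{L-q} be an operator on (C²)^{⊗L} acting nontrivially only on the first q sites, with operator norm ‖A‖ ≤ C. Then for any j = 1,...,L-1, the trace satisfies |tr(T^{-j} A)| ≤ C · 2^{max{q, gcd(j,L)}}, where T is the cyclic shift. -/
open scoped Matrix

/-- The cyclic shift map (sending the basis string `σ` to `x ↦ σ(x+1)`) on binary
strings indexing the product basis of `(ℂ²)^{⊗L}`. -/
def shiftMap (L : ℕ) : (Fin L → Bool) → (Fin L → Bool) :=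
  fun σ i => σ (finRotate L i)

/-- The cyclic shift unitary `T` on `(ℂ²)^{⊗L}`, represented as a permutation
matrix in the product basis indexed by binary strings. -/
def shiftOp (L : ℕ) : Matrix (Fin L → Bool) (Fin L → Bool) ℂ :=
  Matrix.of fun σ τ => if τ = shiftMap L σ then 1 else 0

/-- The momentum projection `Π_k = (1/L) Σ_{j=0}^{L-1} e^{2πi kj/L} T^{-j}`
(where `T^{-j} = T^{L-j}` since `T^L = 1`). -/
noncomputable def momentumProj (L k : ℕ) : Matrix (Fin L → Bool) (Fin L → Bool) ℂ :=
  (L : ℂ)⁻¹ • ∑ j ∈ Finset.range L,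
    Complex.exp (2 * Real.pi * Complex.I * k * j / L) • (shiftOp L) ^ (L - j)

/-- A binary string is aperiodic if no nontrivial cyclic shift fixes it. -/
def Aperiodic (L : ℕ) (σ : Fin L → Bool) : Prop :=
  ∀ j : ℕ, 0 < j → j < L → (shiftMap L)^[j] σ ≠ σ


/-- The `q`-local operator `A = A_q ⊗ I_{L-q}` on `(ℂ²)^{⊗L}` acting nontrivially
only on the first `q` sites. -/
def localOp (L q : ℕ) (h : q ≤ L) (Aq : Matrix (Fin q → Bool) (Fin q → Bool) ℂ) :
    Matrix (Fin L → Bool) (Fin L → Bool) ℂ :=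
  Matrix.of fun σ τ =>
    (if ∀ i : Fin L, q ≤ (i : ℕ) → σ i = τ i then 1 else 0) *
      Aq (σ ∘ Fin.castLE h) (τ ∘ Fin.castLE h)

/-!
Put `m = L - j`, so that `T^m` maps the basis string `σ` to `σ ∘ ρ^m`, `ρ` the rotation of
`Fin L`, and `tr(T^m A) = ∑_σ A(σ ∘ ρ^m, σ)`. Each entry of `A` is bounded by `‖A‖ ≤ C`, and
the entry vanishes unless `σ` is invariant under `ρ^m` away from the first `q` sites. Every
orbit of `i ↦ i + m` on `ℤ/L` meets `{0, …, gcd(m, L) - 1}`, and `gcd(m, L) = gcd(j, L)`;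
following orbits forward, such a `σ` is determined by its values on the first
`max(q, gcd(j, L))` sites, so there are at most `2^max(q, gcd(j, L))` nonzero terms.
-/

open Finset

theorem Nat.exists_add_mul_mod_lt_gcd {L : ℕ} (hL : 0 < L) (m i : ℕ) :
    ∃ k, (i + m * k) % L < Nat.gcd m L := by
  set g := Nat.gcd m L
  have hg : 0 < g := Nat.gcd_pos_of_pos_right m hL
  obtain hgL | hgL := (Nat.gcd_le_right (m := m) hL : g ≤ L).lt_or_eq
  · obtain ⟨u, -, hu⟩ := Nat.exists_mul_mod_eq_gcd hgL
    -- `m * u ≡ g`, so this `k` shifts `i` by `g * (L - 1) * (i / g) ≡ -g * (i / g)`, onto `i % g`.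
    refine ⟨u * ((L - 1) * (i / g)), ?_⟩
    have hmod : i + m * (u * ((L - 1) * (i / g))) ≡ i % g [MOD L] :=
      calc i + m * (u * ((L - 1) * (i / g)))
          = i + m * u * ((L - 1) * (i / g)) := by ring
        _ ≡ i + g * ((L - 1) * (i / g)) [MOD L] :=
          (((Nat.mod_modEq _ _).symm.trans (by rw [hu])).mul_right _).add_left _
        _ = i % g + L * (g * (i / g)) := by
          nth_rewrite 1 [← Nat.mod_add_div i g]
          obtain ⟨L', rfl⟩ : ∃ L', L = L' + 1 := ⟨L - 1, by omega⟩
          simp only [Nat.add_sub_cancel]; ring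
        _ ≡ i % g [MOD L] := Nat.add_mul_mod_self_left _ _ _
    rw [hmod, Nat.mod_eq_of_lt ((Nat.mod_lt i hg).trans hgL)]
    exact Nat.mod_lt i hg
  · exact ⟨0, by simp only [g, hgL]; exact Nat.mod_lt _ hL⟩

theorem Fin.val_finRotate_iterate {L : ℕ} (k : ℕ) (i : Fin L) :
    ((finRotate L)^[k] i : ℕ) = (i + k) % L := by
  obtain _ | n := L
  · exact i.elim0
  induction k with
  | zero => simp [Nat.mod_eq_of_lt i.isLt]
  | succ k ih =>
    rw [Function.iterate_succ_apply', finRotate_apply, Fin.val_add, ih, Fin.val_one',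
      ← Nat.add_mod, add_assoc]

theorem Fin.exists_iterate_finRotate_iterate_lt_gcd {L : ℕ} (m : ℕ) (i : Fin L) :
    ∃ k, (((finRotate L)^[m])^[k] i : ℕ) < Nat.gcd m L := by
  obtain ⟨k, hk⟩ := Nat.exists_add_mul_mod_lt_gcd i.pos m i
  exact ⟨k, by rwa [← Function.iterate_mul, Fin.val_finRotate_iterate]⟩

theorem Matrix.norm_apply_le_norm_toEuclideanCLM {𝕜 n : Type*} [RCLike 𝕜] [Fintype n]
    [DecidableEq n] (A : Matrix n n 𝕜) (a b : n) : ‖A a b‖ ≤ ‖Matrix.toEuclideanCLM (𝕜 := 𝕜) A‖ :=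
  calc ‖A a b‖ = ‖Matrix.toEuclideanCLM (𝕜 := 𝕜) A (EuclideanSpace.single b 1) a‖ := by
        simp [Matrix.mulVec_single]
    _ ≤ ‖Matrix.toEuclideanCLM (𝕜 := 𝕜) A (EuclideanSpace.single b 1)‖ := PiLp.norm_apply_le _ _
    _ ≤ ‖Matrix.toEuclideanCLM (𝕜 := 𝕜) A‖ := by
        simpa using (Matrix.toEuclideanCLM (𝕜 := 𝕜) A).le_opNorm (EuclideanSpace.single b 1)

theorem Function.eq_of_eqOn_of_invariant_off {α β : Type*} {f : α → α} {S : Set α}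
    (hS : ∀ i, ∃ k, f^[k] i ∈ S) {σ τ : α → β} (hσ : ∀ i ∉ S, σ (f i) = σ i)
    (hτ : ∀ i ∉ S, τ (f i) = τ i) (h : S.EqOn σ τ) : σ = τ := by
  suffices ∀ k i, f^[k] i ∈ S → σ i = τ i from funext fun i => (hS i).elim (this · i)
  intro k
  induction k with
  | zero => exact fun i hi => h hi
  | succ k ih =>
    intro i hi
    by_cases hiS : i ∈ S
    · exact h hiS
    · rw [← hσ i hiS, ← hτ i hiS, ih (f i) hi]

theorem Function.card_invariant_off_le {α β : Type*} [Fintype α] [DecidableEq α] [Fintype β]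
    {f : α → α} {S : Finset α} [DecidablePred fun σ : α → β => ∀ i ∉ S, σ (f i) = σ i]
    (hS : ∀ i, ∃ k, f^[k] i ∈ S) :
    #{σ : α → β | ∀ i ∉ S, σ (f i) = σ i} ≤ Fintype.card β ^ #S := by
  calc #{σ : α → β | ∀ i ∉ S, σ (f i) = σ i}
      ≤ #(univ : Finset (S → β)) := by
        refine card_le_card_of_injOn (fun σ i => σ i) (fun _ _ => mem_coe.2 (mem_univ _)) ?_
        intro σ hσ τ hτ hστ
        simp only [coe_filter, mem_univ, true_and, Set.mem_ofPred_eq] at hσ hτ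
        exact eq_of_eqOn_of_invariant_off (S := S) hS hσ hτ fun i hi => congrFun hστ ⟨i, hi⟩
    _ = Fintype.card β ^ #S := by simp

theorem norm_sum_le_card_mul_of_support_subset {ι E : Type*} [Fintype ι]
    [SeminormedAddCommGroup E] {f : ι → E} {s : Finset ι} (hs : ∀ i, f i ≠ 0 → i ∈ s) {C : ℝ}
    (hC : ∀ i ∈ s, ‖f i‖ ≤ C) :
    ‖∑ i, f i‖ ≤ #s * C := by
  rw [← sum_subset (subset_univ s) fun i _ hi => not_not.1 (mt (hs i) hi)]
  simpa using norm_sum_le_of_le s hC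

theorem shiftMap_iterate (L m : ℕ) (σ : Fin L → Bool) :
    (shiftMap L)^[m] σ = σ ∘ (finRotate L)^[m] := by
  induction m with
  | zero => rfl
  | succ m ih => rw [Function.iterate_succ_apply', ih, Function.iterate_succ]; rfl

theorem shiftOp_pow_apply (L n : ℕ) (σ τ : Fin L → Bool) :
    (shiftOp L ^ n) σ τ = if τ = (shiftMap L)^[n] σ then 1 else 0 := by
  induction n generalizing τ with
  | zero => simp [Matrix.one_apply, eq_comm]
  | succ n ih =>
    simp only [pow_succ, Matrix.mul_apply, ih, ite_mul, one_mul, zero_mul, sum_ite_eq',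
      mem_univ, if_true]
    simp [shiftOp, Function.iterate_succ_apply']

theorem trace_shiftOp_pow_mul (L n : ℕ) (B : Matrix (Fin L → Bool) (Fin L → Bool) ℂ) :
    (shiftOp L ^ n * B).trace = ∑ σ, B ((shiftMap L)^[n] σ) σ := by
  simp [Matrix.trace, Matrix.mul_apply, shiftOp_pow_apply, ite_mul]

theorem eq_of_localOp_apply_ne_zero {L q : ℕ} {h : q ≤ L}
    {Aq : Matrix (Fin q → Bool) (Fin q → Bool) ℂ} {σ τ : Fin L → Bool}
    (hne : localOp L q h Aq σ τ ≠ 0) (i : Fin L) (hi : q ≤ (i : ℕ)) :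
    σ i = τ i := by
  by_contra hστ
  exact hne (by rw [localOp, Matrix.of_apply, if_neg fun h' => hστ (h' i hi), zero_mul])

theorem trace_shift_local_bound_general (L q : ℕ) (h : q ≤ L)
    (Aq : Matrix (Fin q → Bool) (Fin q → Bool) ℂ) (C : ℝ)
    (hnorm : ‖Matrix.toEuclideanCLM (𝕜 := ℂ) (localOp L q h Aq)‖ ≤ C)
    (j : ℕ) (hjL : j ≤ L - 1) :
    ‖((shiftOp L) ^ (L - j) * localOp L q h Aq).trace‖ ≤
      C * 2 ^ max q (Nat.gcd j L) := by
  set M := max q (Nat.gcd j L)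
  set S : Finset (Fin L) := {i | (i : ℕ) < M}
  set f := (finRotate L)^[L - j]
  set P : Finset (Fin L → Bool) := {σ | ∀ i ∉ S, σ (f i) = σ i}
  have hreach : ∀ i, ∃ k, f^[k] i ∈ S := fun i =>
    (Fin.exists_iterate_finRotate_iterate_lt_gcd (L - j) i).imp fun k hk => by
      rw [Nat.gcd_self_sub_left (by omega)] at hk
      simp only [S, mem_filter, mem_univ, true_and]
      exact hk.trans_le (le_max_right _ _)
  have hsupp : ∀ σ, localOp L q h Aq ((shiftMap L)^[L - j] σ) σ ≠ 0 → σ ∈ P := fun σ hσ => by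
    simp only [P, S, mem_filter, mem_univ, true_and, not_lt]
    exact fun i hi => by
      simpa [shiftMap_iterate] using eq_of_localOp_apply_ne_zero hσ i ((le_max_left _ _).trans hi)
  have hcard : #P ≤ 2 ^ M := by
    refine (Function.card_invariant_off_le (β := Bool) hreach).trans ?_
    rw [Fintype.card_bool]
    exact Nat.pow_le_pow_right two_pos (Fin.card_filter_val_lt.trans_le (min_le_right _ _))
  calc ‖((shiftOp L) ^ (L - j) * localOp L q h Aq).trace‖
      ≤ #P * C := by
        rw [trace_shiftOp_pow_mul]
        exact norm_sum_le_card_mul_of_support_subset hsupp fun σ _ =>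
          (Matrix.norm_apply_le_norm_toEuclideanCLM _ _ _).trans hnorm
    _ ≤ 2 ^ M * C := by
        gcongr
        · exact (norm_nonneg _).trans hnorm
        · exact_mod_cast hcard
    _ = C * 2 ^ M := mul_comm _ _

/-- If `A = A_q ⊗ I_{L-q}` has operator norm at most `C`, then for any
`j = 1,…,L-1` we have `|tr(T^{-j} A)| ≤ C · 2^{max{q, gcd(j,L)}}`. -/
theorem trace_shift_local_bound (L q : ℕ) (h : q ≤ L)
    (Aq : Matrix (Fin q → Bool) (Fin q → Bool) ℂ) (C : ℝ)
    (hnorm : ‖Matrix.toEuclideanCLM (𝕜 := ℂ) (localOp L q h Aq)‖ ≤ C)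
    (j : ℕ) (hj : 1 ≤ j) (hjL : j ≤ L - 1) :
    ‖((shiftOp L) ^ (L - j) * localOp L q h Aq).trace‖ ≤
      C * 2 ^ max q (Nat.gcd j L) :=
  trace_shift_local_bound_general L q h Aq C hnorm j hjL
end

section
/- Let j be a nonzero element of the d-dimensional torus group T_L = Π_{s=1}^d Z/L_s Z with total size V = Π_s L_s, and let g(j) denote the order of j in T_L. Then the number of binary configurations s: T_L → {0,1} satisfying s(x) = s(x+j) for all x outside a rectangle R_q = Π_s {1,...,q_s} with q_s ≤ L_s/2 for all s, is at most 2^{|R_q| + V/g(j)}; moreover if d ≥ 2 this count is at most 2^{V/2}. -/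
/-!
A configuration is determined by its values on `R` together with one value on each orbit of
`x ↦ x + j` that avoids `R`: following an orbit forward from any point, the constraint propagates
until the orbit reaches `R` or a chosen representative. Hence there are at most
`2 ^ (|R| + #orbits avoiding R)` configurations, and there are `V / g(j)` orbits.

For `d ≥ 2`: if `g(j) ≥ 4` then `|R| ≤ V / 2^d ≤ V / 4` and `V / g(j) ≤ V / 4`. Otherwise
`g = g(j)` is 2 or 3, hence prime, so some coordinate `j_t` also has order `g`, and distinct
points whose `t`-coordinate lies in `[1, L_t / g]` lie in distinct orbits. Thus `R` meets at
least `|R| - |R ∩ {x_t > L_t / g}| ≥ |R| - V (1/2 - 1/g)` orbits, and the count of free bits is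
at most `V / g + V (1/2 - 1/g) = V / 2`.
-/

open Set Function QuotientAddGroup AddSubgroup

section ShiftConstraint

variable {G β : Type*}

theorem eq_of_eqOn_of_shift_invariant_outside [AddMonoid G] {j : G} {R T : Set G}
    {f f' : G → β} (hf : ∀ x ∉ R, f x = f (x + j)) (hf' : ∀ x ∉ R, f' x = f' (x + j))
    (hRT : R ⊆ T) (hT : ∀ x, ∃ k : ℕ, x + k • j ∈ T) (h : EqOn f f' T) : f = f' := by
  suffices key : ∀ k : ℕ, ∀ x, x + k • j ∈ T → f x = f' x from
    funext fun x => (hT x).elim fun k => key k x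
  intro k
  induction k with
  | zero => exact fun x hx => h (by simpa using hx)
  | succ k ih =>
    intro x hx
    by_cases hxR : x ∈ R
    · exact h (hRT hxR)
    · rw [hf x hxR, hf' x hxR]
      exact ih _ (by rwa [add_assoc, ← succ_nsmul'])

theorem card_shift_invariant_outside_le_pow_ncard [AddMonoid G] [Finite β] {j : G} {R T : Set G}
    (hT_fin : T.Finite) (hRT : R ⊆ T) (hT : ∀ x, ∃ k : ℕ, x + k • j ∈ T) :
    Nat.card {f : G → β // ∀ x ∉ R, f x = f (x + j)} ≤ Nat.card β ^ T.ncard := by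
  have : Finite T := hT_fin
  calc Nat.card {f : G → β // ∀ x ∉ R, f x = f (x + j)}
      ≤ Nat.card (T → β) :=
        Nat.card_le_card_of_injective (fun f x => f.1 x) fun f f' hff' =>
          Subtype.ext (eq_of_eqOn_of_shift_invariant_outside f.2 f'.2 hRT hT
            fun x hx => congrFun hff' ⟨x, hx⟩)
    _ = Nat.card β ^ T.ncard := by rw [Nat.card_fun, Nat.card_coe_set_eq]

theorem exists_nsmul_add_eq_of_mk_eq [AddGroup G] [Finite G] {j x y : G}
    (h : (x : G ⧸ zmultiples j) = y) : ∃ k : ℕ, x + k • j = y := by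
  obtain ⟨k, hk⟩ := mem_multiples_iff_mem_zmultiples.mpr (QuotientAddGroup.eq.mp h)
  exact ⟨k, by rw [show k • j = -x + y from hk, add_neg_cancel_left]⟩

noncomputable def numFreeBits [AddGroup G] (j : G) (R : Set G) : ℕ :=
  R.ncard + ((↑) '' R : Set (G ⧸ zmultiples j))ᶜ.ncard

theorem card_shift_invariant_outside_le_pow_numFreeBits [AddGroup G] [Finite G] [Finite β]
    [Nonempty β] (j : G) (R : Set G) :
    Nat.card {f : G → β // ∀ x ∉ R, f x = f (x + j)} ≤ Nat.card β ^ numFreeBits j R := by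
  set T := R ∪ Quotient.out '' ((↑) '' R : Set (G ⧸ zmultiples j))ᶜ
  have hT : ∀ x, ∃ k : ℕ, x + k • j ∈ T := by
    intro x
    by_cases hx : (x : G ⧸ zmultiples j) ∈ (↑) '' R
    · obtain ⟨r, hr, hxr⟩ := hx
      obtain ⟨k, hk⟩ := exists_nsmul_add_eq_of_mk_eq hxr.symm
      exact ⟨k, Or.inl (hk ▸ hr)⟩
    · obtain ⟨k, hk⟩ := exists_nsmul_add_eq_of_mk_eq (out_eq' (x : G ⧸ zmultiples j)).symm
      exact ⟨k, Or.inr (hk ▸ mem_image_of_mem _ hx)⟩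
  refine (card_shift_invariant_outside_le_pow_ncard (toFinite T) subset_union_left hT).trans
    (Nat.pow_le_pow_right Nat.card_pos ?_)
  exact (ncard_union_le _ _).trans (Nat.add_le_add_left (ncard_image_le (toFinite _)) _)

theorem Nat.card_quotient_zmultiples_mul_addOrderOf [AddGroup G] (j : G) :
    Nat.card (G ⧸ zmultiples j) * addOrderOf j = Nat.card G := by
  rw [← Nat.card_zmultiples, ← card_eq_card_quotient_mul_card_addSubgroup]

theorem numFreeBits_le_ncard_add_card_div [AddGroup G] [Finite G] (j : G) (R : Set G) :
    numFreeBits j R ≤ R.ncard + Nat.card G / addOrderOf j := by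
  rw [← Nat.card_quotient_zmultiples_mul_addOrderOf j, Nat.mul_div_cancel _ (addOrderOf_pos j)]
  exact Nat.add_le_add_left (ncard_le_card _) _

end ShiftConstraint

theorem Set.ncard_univ_pi {ι : Type*} [Fintype ι] {α : ι → Type*} (S : ∀ i, Set (α i)) :
    (univ.pi S).ncard = ∏ i, (S i).ncard := by
  simp only [ncard_def, encard_pi_eq_prod_encard, ENat.toNat_prod]

theorem ZMod.ncard_setOf_val_mem_Icc {n : ℕ} [NeZero n] {a b : ℕ} (hb : b < n) :
    {v : ZMod n | v.val ∈ Icc a b}.ncard = b + 1 - a := by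
  change (ZMod.val ⁻¹' Icc a b).ncard = _
  rw [ncard_preimage_of_injective_subset_range (ZMod.val_injective n), ncard_Icc_nat]
  exact fun k hk => ⟨k, ZMod.val_cast_of_lt (hk.2.trans_lt hb)⟩

theorem ZMod.eq_of_nsmul_sub_eq_zero {n g m : ℕ} [NeZero n] (hgm : g * m = n) {a b : ZMod n}
    (h : g • (a - b) = 0) (hab : a.val < b.val + m) (hba : b.val < a.val + m) : a = b := by
  have hg : (g : ℤ) ≠ 0 := by exact_mod_cast left_ne_zero_of_mul (hgm ▸ NeZero.ne n)
  have hdvd : (g : ℤ) * m ∣ g * ((a.val : ℤ) - b.val) := by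
    rw [← Nat.cast_mul, hgm, ← ZMod.intCast_zmod_eq_zero_iff_dvd]
    push_cast
    simpa [nsmul_eq_mul] using h
  have := Int.eq_zero_of_abs_lt_dvd (Int.dvd_of_mul_dvd_mul_left hg hdvd)
    (abs_sub_lt_iff.mpr ⟨by omega, by omega⟩)
  exact ZMod.val_injective n (by omega)

theorem exists_addOrderOf_apply_eq_of_prime {ι : Type*} {M : ι → Type*} [∀ i, AddMonoid (M i)]
    {j : ∀ i, M i} (hp : (addOrderOf j).Prime) : ∃ t, addOrderOf (j t) = addOrderOf j := by
  have hj : j ≠ 0 := fun h => hp.ne_one (h ▸ addOrderOf_zero)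
  obtain ⟨t, ht⟩ := Function.ne_iff.mp hj
  refine ⟨t, (hp.eq_one_or_self_of_dvd _ ?_).resolve_left ?_⟩
  · exact addOrderOf_dvd_of_nsmul_eq_zero (congrFun (addOrderOf_nsmul_eq_zero j) t)
  · exact fun h => ht (AddMonoid.addOrderOf_eq_one_iff.mp h)

theorem Set.ncard_le_ncard_image_add_ncard_sdiff {α β : Type*} {f : α → β} {s A : Set α}
    (hs : s.Finite) (hf : InjOn f A) : s.ncard ≤ (f '' s).ncard + (s \ A).ncard := by
  rw [← ncard_inter_add_ncard_sdiff_eq_ncard s A hs, ← (hf.mono inter_subset_right).ncard_image]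
  gcongr
  · exact hs.image f
  · exact inter_subset_left

section Torus

variable {ι : Type*} [Fintype ι] {L : ι → ℕ} [∀ s, NeZero (L s)]

omit [∀ s, NeZero (L s)] in
theorem Nat.card_pi_zmod : Nat.card (∀ s, ZMod (L s)) = ∏ s, L s := by
  simp only [Nat.card_pi, Nat.card_zmod]

theorem ncard_setOf_val_apply_mem_Icc_mul (t : ι) {a b : ℕ} (hb : b < L t) :
    {x : ∀ s, ZMod (L s) | (x t).val ∈ Icc a b}.ncard * L t = (b + 1 - a) * ∏ s, L s := by
  classical
  set S : ∀ s, Set (ZMod (L s)) := update (fun _ => univ) t {v | v.val ∈ Icc a b}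
  have hslab : {x : ∀ s, ZMod (L s) | (x t).val ∈ Icc a b} = univ.pi S := by
    ext x
    simp only [mem_univ_pi]
    refine ⟨fun hx s => ?_, fun hx => by simpa [S] using hx t⟩
    rcases eq_or_ne s t with rfl | hst
    · simpa [S] using hx
    · simp [S, hst]
  have hcard : ∀ s, (S s).ncard = update L t (b + 1 - a) s := by
    intro s
    rcases eq_or_ne s t with rfl | hst
    · simp only [S, update_self, ZMod.ncard_setOf_val_mem_Icc hb]
    · simp only [S, update_of_ne hst, ncard_univ, Nat.card_zmod]
  rw [hslab, ncard_univ_pi, Finset.prod_congr rfl fun s _ => hcard s,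
    Finset.prod_update_of_mem (Finset.mem_univ t),
    Finset.prod_eq_mul_prod_sdiff_singleton_of_mem (Finset.mem_univ t) L]
  ring

def torusBox (L q : ι → ℕ) : Set (∀ s, ZMod (L s)) := {x | ∀ s, (x s).val ∈ Icc 1 (q s)}

theorem ncard_torusBox {q : ι → ℕ} (hq : ∀ s, q s < L s) :
    (torusBox L q).ncard = ∏ s, q s := by
  have : torusBox L q = univ.pi fun s => {v | v.val ∈ Icc 1 (q s)} := by
    ext x; simp [torusBox]
  rw [this, ncard_univ_pi]
  exact Finset.prod_congr rfl fun s _ => (ZMod.ncard_setOf_val_mem_Icc (hq s)).trans (by omega)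

omit [Fintype ι] in
theorem injOn_mk_setOf_val_apply_mem_Icc {j : ∀ s, ZMod (L s)} {t : ι}
    (hjt : addOrderOf (j t) = addOrderOf j) {m : ℕ} (hm : addOrderOf j * m = L t) :
    InjOn ((↑) : (∀ s, ZMod (L s)) → (∀ s, ZMod (L s)) ⧸ zmultiples j)
      {x | (x t).val ∈ Icc 1 m} := by
  rintro x ⟨hx1, hx2⟩ y ⟨hy1, hy2⟩ hxy
  obtain ⟨z, hz⟩ := mem_zmultiples_iff.mp (QuotientAddGroup.eq.mp hxy)
  have hzt : z • j t = y t - x t := by simpa [sub_eq_neg_add] using congrFun hz t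
  have hyx : y t = x t := by
    refine ZMod.eq_of_nsmul_sub_eq_zero hm ?_ (by omega) (by omega)
    rw [← hzt, smul_comm, ← hjt, addOrderOf_nsmul_eq_zero, smul_zero]
  have hz0 : z • j = 0 := by
    rw [← addOrderOf_dvd_iff_zsmul_eq_zero, ← hjt, addOrderOf_dvd_iff_zsmul_eq_zero, hzt, hyx,
      sub_self]
  exact neg_add_eq_zero.mp (hz ▸ hz0)

theorem two_mul_numFreeBits_torusBox_le_of_four_le (hd : 2 ≤ Fintype.card ι) {q : ι → ℕ}
    (hq : ∀ s, 2 * q s ≤ L s) {j : ∀ s, ZMod (L s)} (hg : 4 ≤ addOrderOf j) :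
    2 * numFreeBits j (torusBox L q) ≤ ∏ s, L s := by
  have hbox : 4 * (torusBox L q).ncard ≤ ∏ s, L s := calc
    4 * (torusBox L q).ncard ≤ 2 ^ Fintype.card ι * ∏ s, q s := by
      rw [ncard_torusBox fun s => by have := hq s; have := NeZero.ne (L s); omega]
      gcongr
      calc 4 = 2 ^ 2 := by norm_num
        _ ≤ 2 ^ Fintype.card ι := Nat.pow_le_pow_right two_pos hd
    _ = ∏ s, 2 * q s := by rw [Finset.prod_mul_distrib, Finset.prod_const, Finset.card_univ]
    _ ≤ ∏ s, L s := Finset.prod_le_prod' fun s _ => hq s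
  have horbits :
      4 * ((↑) '' torusBox L q : Set (_ ⧸ zmultiples j))ᶜ.ncard ≤ ∏ s, L s := calc
    _ ≤ addOrderOf j * Nat.card ((∀ s, ZMod (L s)) ⧸ zmultiples j) :=
      Nat.mul_le_mul hg (ncard_le_card _)
    _ = ∏ s, L s := by
      rw [mul_comm, Nat.card_quotient_zmultiples_mul_addOrderOf, Nat.card_pi_zmod]
  unfold numFreeBits
  omega

theorem two_mul_numFreeBits_torusBox_le_of_prime {q : ι → ℕ} (hq : ∀ s, 2 * q s ≤ L s)
    {j : ∀ s, ZMod (L s)} (hp : (addOrderOf j).Prime) :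
    2 * numFreeBits j (torusBox L q) ≤ ∏ s, L s := by
  set g := addOrderOf j
  set R := torusBox L q
  set V := ∏ s, L s
  set Q := Nat.card ((∀ s, ZMod (L s)) ⧸ zmultiples j)
  set π : (∀ s, ZMod (L s)) → (∀ s, ZMod (L s)) ⧸ zmultiples j := (↑)
  obtain ⟨t, hjt⟩ := exists_addOrderOf_apply_eq_of_prime hp
  obtain ⟨m, hm⟩ : g ∣ L t := by
    simpa [hjt] using addOrderOf_dvd_natCard (j t)
  set D := (R \ {x | (x t).val ∈ Icc 1 m}).ncard
  have hsplit : R.ncard ≤ (π '' R).ncard + D :=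
    ncard_le_ncard_image_add_ncard_sdiff (toFinite R)
      (injOn_mk_setOf_val_apply_mem_Icc hjt hm.symm)
  have hslab : D * L t ≤ (q t - m) * V := by
    have hsub : R \ {x | (x t).val ∈ Icc 1 m} ⊆ {x | (x t).val ∈ Icc (m + 1) (q t)} := by
      rintro x ⟨hxR, hxA⟩
      have := hxR t
      simp only [mem_ofPred_eq, mem_Icc] at this hxA ⊢
      omega
    have hqt : q t < L t := by have := hq t; have := NeZero.ne (L t); omega
    calc D * L t ≤ {x : ∀ s, ZMod (L s) | (x t).val ∈ Icc (m + 1) (q t)}.ncard * L t :=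
          Nat.mul_le_mul_right _ (ncard_le_ncard hsub)
      _ = (q t - m) * V := by
          rw [ncard_setOf_val_apply_mem_Icc_mul t hqt, Nat.add_sub_add_right]
  have horbits : (π '' R)ᶜ.ncard + (π '' R).ncard = Q := ncard_compl_add_ncard _
  have hcosets : Q * g = V := by
    rw [Nat.card_quotient_zmultiples_mul_addOrderOf, Nat.card_pi_zmod]
  have hqm : 2 * (q t - m) + 2 * m ≤ g * m := by
    have := Nat.mul_le_mul_right m hp.two_le
    have := hq t
    omega
  rw [hm] at hslab
  have hm0 : 0 < g * m := by have := NeZero.ne (L t); omega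
  have hfree : numFreeBits j R ≤ Q + D := by
    rw [show numFreeBits j R = R.ncard + (π '' R)ᶜ.ncard from rfl]
    omega
  refine Nat.le_of_mul_le_mul_right ?_ hm0
  calc 2 * numFreeBits j R * (g * m) ≤ 2 * (Q + D) * (g * m) := by gcongr
    _ = 2 * m * (Q * g) + 2 * (D * (g * m)) := by ring
    _ ≤ 2 * m * V + 2 * ((q t - m) * V) := by rw [hcosets]; gcongr
    _ = (2 * (q t - m) + 2 * m) * V := by ring
    _ ≤ V * (g * m) := by rw [mul_comm V]; gcongr

end Torus

/-- Let `j ≠ 0` in the `d`-dimensional torus group `T_L = Π_s Z/L_s Z` of volume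
`V = Π_s L_s`, with order `g(j) = addOrderOf j`. The number of binary
configurations `s : T_L → Bool` satisfying `s(x) = s(x+j)` for all `x` outside
the rectangle `R_q = Π_s {1,…,q_s}` (with `q_s ≤ L_s/2` for all `s`) is at most
`2^{|R_q| + V/g(j)}`; moreover if `d ≥ 2` this count is at most `2^{V/2}`. -/
theorem torus_shift_constraint_count (d : ℕ) (L q : Fin d → ℕ)
    (hL : ∀ s, 1 ≤ L s) (hq : ∀ s, 2 * q s ≤ L s)
    (j : ∀ s, ZMod (L s)) (hj : j ≠ 0) :
    Nat.card {f : (∀ s, ZMod (L s)) → Bool //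
        ∀ x : ∀ s, ZMod (L s), (¬ ∀ s, 1 ≤ (x s).val ∧ (x s).val ≤ q s) →
          f x = f (x + j)} ≤
      2 ^ ((∏ s, q s) + (∏ s, L s) / addOrderOf j) ∧
    (2 ≤ d →
      ((Nat.card {f : (∀ s, ZMod (L s)) → Bool //
          ∀ x : ∀ s, ZMod (L s), (¬ ∀ s, 1 ≤ (x s).val ∧ (x s).val ≤ q s) →
            f x = f (x + j)} : ℝ) ≤ (2 : ℝ) ^ (((∏ s, L s : ℕ) : ℝ) / 2))) := by
  have : ∀ s, NeZero (L s) := fun s => ⟨by have := hL s; omega⟩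
  have hcount := card_shift_invariant_outside_le_pow_numFreeBits (β := Bool) j (torusBox L q)
  rw [Nat.card_eq_fintype_card (α := Bool), Fintype.card_bool] at hcount
  refine ⟨hcount.trans (Nat.pow_le_pow_right two_pos ?_), fun hd => ?_⟩
  · rw [← ncard_torusBox (L := L) (q := q) fun s => by have := hq s; have := hL s; omega,
      ← Nat.card_pi_zmod]
    exact numFreeBits_le_ncard_add_card_div j _
  have hbits : 2 * numFreeBits j (torusBox L q) ≤ ∏ s, L s := by
    rcases le_or_gt 4 (addOrderOf j) with hg | hg
    · exact two_mul_numFreeBits_torusBox_le_of_four_le (by simpa using hd) hq hg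
    · refine two_mul_numFreeBits_torusBox_le_of_prime hq ?_
      have h1 : addOrderOf j ≠ 1 := mt AddMonoid.addOrderOf_eq_one_iff.mp hj
      have h0 := addOrderOf_pos j
      obtain h | h : addOrderOf j = 2 ∨ addOrderOf j = 3 := by omega
      · rw [h]; exact Nat.prime_two
      · rw [h]; exact Nat.prime_three
  calc _ ≤ (2 : ℝ) ^ numFreeBits j (torusBox L q) := by exact_mod_cast hcount
    _ = (2 : ℝ) ^ (numFreeBits j (torusBox L q) : ℝ) := (Real.rpow_natCast _ _).symm
    _ ≤ _ := by
      gcongr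
      · norm_num
      · rw [le_div_iff₀ two_pos]; exact_mod_cast (mul_comm _ _).trans_le hbits
end
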